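/- arXiv:2511.20323 — 7 statements merged into one kernel-verified Lean document; each statement's English description precedes it below -/
import Mathlib

section
/- Let L be a Lie ring whose derived ideal L' = [L, L] is abelian, and let x ∈ L be such that ad_x restricts to a bijection of L' onto itself. Then L = L' ⊕ C_L(x) as additive groups (L = L' + C_L(x) and L' ∩ C_L(x) = 0), the centralizer C_L(x) is an abelian subring, and C_L(x) is self-normalizing; hence C_L(x) is a Cartan subring of L. -/
/-!
Every bracket lies in `L'`, and by the Leibniz rule `ad_x` kills `⁅a, b⁆` whenever it kills
`a` and `b`. Since `ad_x` is injective on `L'`, the centralizer `C_L(x)` is therefore abelian,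
and `[y, x] ∈ L' ∩ C_L(x) = 0` for every `y` normalizing `C_L(x)`. Surjectivity of `ad_x` on `L'`
splits any `y` as `z + (y - z)` with `z ∈ L'` and `⁅x, z⁆ = ⁅x, y⁆`.
-/

namespace LieAlgebra

variable (R : Type*) {L : Type*} [CommRing R] [LieRing L] [LieAlgebra R L]

theorem lie_mem_derivedSeries_one (a b : L) : ⁅a, b⁆ ∈ derivedSeries R L 1 := by
  rw [derivedSeries_def, derivedSeriesOfIdeal_succ, derivedSeriesOfIdeal_zero]
  exact LieSubmodule.lie_mem_lie (LieSubmodule.mem_top a) (LieSubmodule.mem_top b)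

def centralizerOf (x : L) : LieSubalgebra R L where
  carrier := {y | ⁅x, y⁆ = 0}
  add_mem' {a b} ha hb := by
    simp only [Set.mem_ofPred_eq, lie_add] at ha hb ⊢
    rw [ha, hb, add_zero]
  zero_mem' := lie_zero x
  smul_mem' t a ha := by
    simp only [Set.mem_ofPred_eq, lie_smul] at ha ⊢
    rw [ha, smul_zero]
  lie_mem' {a b} ha hb := by
    simp only [Set.mem_ofPred_eq] at ha hb ⊢
    rw [leibniz_lie, ha, hb, lie_zero, zero_lie, add_zero]

variable {R}

@[simp]
theorem mem_centralizerOf {x y : L} : y ∈ centralizerOf R x ↔ ⁅x, y⁆ = 0 := Iff.rfl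

theorem coe_centralizerOf (x : L) : (centralizerOf R x : Set L) = {y | ⁅x, y⁆ = 0} := rfl

theorem lie_eq_zero_of_mem_centralizerOf {x : L}
    (hker : ∀ z ∈ derivedSeries R L 1, ⁅x, z⁆ = 0 → z = 0) {a b : L} (ha : a ∈ centralizerOf R x)
    (hb : b ∈ centralizerOf R x) : ⁅a, b⁆ = 0 :=
  hker _ (lie_mem_derivedSeries_one R a b) ((centralizerOf R x).lie_mem ha hb)

theorem normalizer_centralizerOf {x : L}
    (hker : ∀ z ∈ derivedSeries R L 1, ⁅x, z⁆ = 0 → z = 0) :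
    (centralizerOf R x).normalizer = centralizerOf R x := by
  refine le_antisymm (fun y hy => ?_) (LieSubalgebra.le_normalizer _)
  have hyx : ⁅y, x⁆ = 0 :=
    hker _ (lie_mem_derivedSeries_one R y x)
      ((LieSubalgebra.mem_normalizer_iff _ y).mp hy x (lie_self x))
  rw [mem_centralizerOf, ← lie_skew, hyx, neg_zero]

theorem exists_mem_derivedSeries_add_mem_centralizerOf {x : L}
    (hsurj : ∀ w ∈ derivedSeries R L 1, ∃ z ∈ derivedSeries R L 1, ⁅x, z⁆ = w) (y : L) :
    ∃ z ∈ derivedSeries R L 1, ∃ c : L, ⁅x, c⁆ = 0 ∧ y = z + c := by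
  obtain ⟨z, hz, hzy⟩ := hsurj ⁅x, y⁆ (lie_mem_derivedSeries_one R x y)
  exact ⟨z, hz, y - z, by rw [lie_sub, hzy, sub_self], by abel⟩

end LieAlgebra

theorem stmt_4_general {L : Type*} [LieRing L]
    (x : L)
    (hinj : ∀ z ∈ LieAlgebra.derivedSeries ℤ L 1, ∀ w ∈ LieAlgebra.derivedSeries ℤ L 1,
      ⁅x, z⁆ = ⁅x, w⁆ → z = w)
    (hsurj : ∀ w ∈ LieAlgebra.derivedSeries ℤ L 1,
      ∃ z ∈ LieAlgebra.derivedSeries ℤ L 1, ⁅x, z⁆ = w) :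
    -- L = L' + C_L(x)
    (∀ y : L, ∃ z ∈ LieAlgebra.derivedSeries ℤ L 1, ∃ c : L, ⁅x, c⁆ = 0 ∧ y = z + c) ∧
    -- L' ∩ C_L(x) = 0
    (∀ z ∈ LieAlgebra.derivedSeries ℤ L 1, ⁅x, z⁆ = 0 → z = 0) ∧
    -- C_L(x) is an abelian, self-normalizing subring (i.e. a Cartan subring)
    (∃ c : LieSubalgebra ℤ L, (c : Set L) = {y : L | ⁅x, y⁆ = 0} ∧
      (∀ a ∈ c, ∀ b ∈ c, ⁅a, b⁆ = (0 : L)) ∧ c.normalizer = c) := by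
  have hker : ∀ z ∈ LieAlgebra.derivedSeries ℤ L 1, ⁅x, z⁆ = 0 → z = 0 := fun z hz hxz =>
    hinj z hz 0 (zero_mem _) (by rw [hxz, lie_zero])
  exact ⟨LieAlgebra.exists_mem_derivedSeries_add_mem_centralizerOf hsurj, hker,
    LieAlgebra.centralizerOf ℤ x, LieAlgebra.coe_centralizerOf x,
    fun _ ha _ hb => LieAlgebra.lie_eq_zero_of_mem_centralizerOf hker ha hb,
    LieAlgebra.normalizer_centralizerOf hker⟩

/-- Let `L` be a Lie ring with abelian derived ideal `L'` and let `x ∈ L` be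
such that `ad_x` restricts to a bijection of `L'` onto itself.  Then `L = L' ⊕ C_L(x)` as
additive groups, `C_L(x)` is an abelian subring, and `C_L(x)` is self-normalizing; hence
`C_L(x)` is a Cartan subring of `L`. -/
theorem stmt_4 {L : Type*} [LieRing L]
    (habel : ∀ a ∈ LieAlgebra.derivedSeries ℤ L 1, ∀ b ∈ LieAlgebra.derivedSeries ℤ L 1,
      ⁅a, b⁆ = (0 : L))
    (x : L)
    (hmaps : ∀ z ∈ LieAlgebra.derivedSeries ℤ L 1, ⁅x, z⁆ ∈ LieAlgebra.derivedSeries ℤ L 1)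
    (hinj : ∀ z ∈ LieAlgebra.derivedSeries ℤ L 1, ∀ w ∈ LieAlgebra.derivedSeries ℤ L 1,
      ⁅x, z⁆ = ⁅x, w⁆ → z = w)
    (hsurj : ∀ w ∈ LieAlgebra.derivedSeries ℤ L 1,
      ∃ z ∈ LieAlgebra.derivedSeries ℤ L 1, ⁅x, z⁆ = w) :
    -- L = L' + C_L(x)
    (∀ y : L, ∃ z ∈ LieAlgebra.derivedSeries ℤ L 1, ∃ c : L, ⁅x, c⁆ = 0 ∧ y = z + c) ∧
    -- L' ∩ C_L(x) = 0
    (∀ z ∈ LieAlgebra.derivedSeries ℤ L 1, ⁅x, z⁆ = 0 → z = 0) ∧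
    -- C_L(x) is an abelian, self-normalizing subring (i.e. a Cartan subring)
    (∃ c : LieSubalgebra ℤ L, (c : Set L) = {y : L | ⁅x, y⁆ = 0} ∧
      (∀ a ∈ c, ∀ b ∈ c, ⁅a, b⁆ = (0 : L)) ∧ c.normalizer = c) :=
  stmt_4_general x hinj hsurj
end

section
/- Let L be a Lie ring whose derived ideal L' = [L, L] is abelian. Let a and b be subrings of L, each of which is an additive complement of L' (i.e., L = L' + a with L' ∩ a = 0, and L = L' + b with L' ∩ b = 0). Suppose there exists a₀ ∈ a such that ad_{a₀} restricts to a bijection of L' onto itself. Then there exists z ∈ L' such that the automorphism exp(ad_z) = id + ad_z maps b onto a; in particular the two complements are conjugated by an inner automorphism. -/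
/-!
Both complements are abelian, being isomorphic to `L / L'`. Write `a₀ = c₀ + w₀` with `c₀ ∈ L'`,
`w₀ ∈ b`, and take `z ∈ L'` with `⁅a₀, z⁆ = -c₀`. If `w ∈ b` splits as `w = c + x` with
`c ∈ L'` and `x ∈ a`, the vanishing of `⁅a₀, x⁆` and `⁅w₀, w⁆` forces `⁅a₀, c + ⁅z, w⁆⁆ = 0`,
hence `⁅z, w⁆ = -c` since `ad a₀` is injective on `L'`. So `y ↦ y + ⁅z, y⁆` sends every
`w ∈ b` to its component in `a`, and it is onto `a` because `L'`-cosets meet `b`.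
-/

namespace LieRing

variable {L : Type*} [LieRing L]

lemma lie_mem_derivedSeries_one (x y : L) : ⁅x, y⁆ ∈ LieAlgebra.derivedSeries ℤ L 1 := by
  rw [LieAlgebra.derivedSeries_def, LieAlgebra.derivedSeriesOfIdeal_succ,
    LieAlgebra.derivedSeriesOfIdeal_zero]
  exact LieSubmodule.lie_mem_lie (LieSubmodule.mem_top x) (LieSubmodule.mem_top y)

variable {I : LieIdeal ℤ L}

lemma image_add_lie_eq_of_forall_lie_eq_neg {a b : LieSubalgebra ℤ L}
    (hsuma : ∀ y : L, ∃ c ∈ I, ∃ x ∈ a, y = c + x) (hsumb : ∀ y : L, ∃ c ∈ I, ∃ w ∈ b, y = c + w)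
    {z : L} (hz : ∀ w ∈ b, ∀ c ∈ I, ∀ x ∈ a, w = c + x → ⁅z, w⁆ = -c) :
    (fun y : L => y + ⁅z, y⁆) '' (b : Set L) = (a : Set L) := by
  ext y
  constructor
  · rintro ⟨w, hw, rfl⟩
    obtain ⟨c, hc, x, hx, hw_eq⟩ := hsuma w
    show w + ⁅z, w⁆ ∈ a
    rwa [hz w hw c hc x hx hw_eq, hw_eq, add_neg_cancel_comm]
  · intro hy
    obtain ⟨c, hc, w, hw, hy_eq⟩ := hsumb y
    have hw_eq : w = -c + y := by rw [hy_eq, neg_add_cancel_left]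
    refine ⟨w, hw, show w + ⁅z, w⁆ = y from ?_⟩
    rw [hz w hw (-c) (neg_mem hc) y hy hw_eq, neg_neg, hy_eq, add_comm]

variable (hI : ∀ x y : L, ⁅x, y⁆ ∈ I)
  (hIab : ∀ x ∈ I, ∀ y ∈ I, ⁅x, y⁆ = (0 : L))
include hI

lemma lie_eq_zero_of_disjoint {a : LieSubalgebra ℤ L} (ha : ∀ y ∈ I, y ∈ a → y = 0)
    {x y : L} (hx : x ∈ a) (hy : y ∈ a) : ⁅x, y⁆ = 0 :=
  ha _ (hI x y) (a.lie_mem hx hy)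

include hIab

variable {a b : LieSubalgebra ℤ L} (hinta : ∀ y ∈ I, y ∈ a → y = 0)
  (hintb : ∀ y ∈ I, y ∈ b → y = 0)
  {a₀ c₀ w₀ z : L} (ha₀ : a₀ ∈ a) (hc₀ : c₀ ∈ I) (hw₀ : w₀ ∈ b) (ha₀_eq : a₀ = c₀ + w₀)
  (hz : z ∈ I) (hza₀ : ⁅a₀, z⁆ = -c₀)
include hinta hintb ha₀ hc₀ hw₀ ha₀_eq hz hza₀

lemma lie_add_lie_eq_zero {w c x : L} (hw : w ∈ b) (hc : c ∈ I) (hx : x ∈ a)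
    (hw_eq : w = c + x) : ⁅a₀, c + ⁅z, w⁆⁆ = 0 := by
  have hxa₀ : ⁅c₀, x⁆ + ⁅w₀, x⁆ = 0 := by
    rw [← add_lie, ← ha₀_eq]; exact lie_eq_zero_of_disjoint hI hinta ha₀ hx
  have hw₀w : ⁅w₀, c⁆ + ⁅w₀, x⁆ = 0 := by
    rw [← lie_add, ← hw_eq]; exact lie_eq_zero_of_disjoint hI hintb hw₀ hw
  have hac : ⁅a₀, c⁆ = ⁅w₀, c⁆ := by
    rw [ha₀_eq, add_lie, hIab c₀ hc₀ c hc, zero_add]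
  have hazw : ⁅a₀, ⁅z, w⁆⁆ = -⁅c₀, x⁆ := by
    rw [leibniz_lie, hza₀, hIab z hz _ (hI a₀ w), add_zero, neg_lie, hw_eq, lie_add,
      hIab c₀ hc₀ c hc, zero_add]
  rw [lie_add, hac, hazw, eq_neg_of_add_eq_zero_left hw₀w, eq_neg_of_add_eq_zero_left hxa₀,
    neg_neg, neg_add_cancel]

lemma lie_eq_neg_of_eq_add (hker : ∀ u ∈ I, ⁅a₀, u⁆ = 0 → u = 0) {w c x : L} (hw : w ∈ b)
    (hc : c ∈ I) (hx : x ∈ a) (hw_eq : w = c + x) : ⁅z, w⁆ = -c :=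
  eq_neg_of_add_eq_zero_right <| hker _ (add_mem hc (hI z w)) <|
    lie_add_lie_eq_zero hI hIab hinta hintb ha₀ hc₀ hw₀ ha₀_eq hz hza₀ hw hc hx hw_eq

end LieRing

open LieRing in
theorem stmt_6_general {L : Type*} [LieRing L]
    (habel : ∀ a ∈ LieAlgebra.derivedSeries ℤ L 1, ∀ b ∈ LieAlgebra.derivedSeries ℤ L 1,
      ⁅a, b⁆ = (0 : L))
    (a b : LieSubalgebra ℤ L)
    (hsuma : ∀ y : L, ∃ z ∈ LieAlgebra.derivedSeries ℤ L 1, ∃ w ∈ a, y = z + w)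
    (hinta : ∀ y ∈ LieAlgebra.derivedSeries ℤ L 1, y ∈ a → y = 0)
    (hsumb : ∀ y : L, ∃ z ∈ LieAlgebra.derivedSeries ℤ L 1, ∃ w ∈ b, y = z + w)
    (hintb : ∀ y ∈ LieAlgebra.derivedSeries ℤ L 1, y ∈ b → y = 0)
    (a₀ : L) (ha₀ : a₀ ∈ a)
    (hinj : ∀ z ∈ LieAlgebra.derivedSeries ℤ L 1, ∀ w ∈ LieAlgebra.derivedSeries ℤ L 1,
      ⁅a₀, z⁆ = ⁅a₀, w⁆ → z = w)
    (hsurj : ∀ w ∈ LieAlgebra.derivedSeries ℤ L 1,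
      ∃ z ∈ LieAlgebra.derivedSeries ℤ L 1, ⁅a₀, z⁆ = w) :
    ∃ z ∈ LieAlgebra.derivedSeries ℤ L 1,
      (fun y : L => y + ⁅z, y⁆) '' (b : Set L) = (a : Set L) := by
  obtain ⟨c₀, hc₀, w₀, hw₀, ha₀_eq⟩ := hsumb a₀
  obtain ⟨z, hz, hza₀⟩ := hsurj (-c₀) (neg_mem hc₀)
  have hker : ∀ u ∈ LieAlgebra.derivedSeries ℤ L 1, ⁅a₀, u⁆ = 0 → u = 0 :=
    fun u hu hu₀ => hinj u hu 0 (zero_mem _) (by rw [hu₀, lie_zero])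
  refine ⟨z, hz, image_add_lie_eq_of_forall_lie_eq_neg hsuma hsumb ?_⟩
  exact fun w hw c hc x hx hw_eq => lie_eq_neg_of_eq_add lie_mem_derivedSeries_one habel hinta
    hintb ha₀ hc₀ hw₀ ha₀_eq hz hza₀ hker hw hc hx hw_eq

/-- Let `L` be a Lie ring with abelian derived ideal `L'`, and let `a`, `b` be
subrings of `L`, each an additive complement of `L'`.  If some `a₀ ∈ a` is such that
`ad_{a₀}` restricts to a bijection of `L'` onto itself, then there is `z ∈ L'` such that the
automorphism `exp(ad_z) = id + ad_z` maps `b` onto `a`. -/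
theorem stmt_6 {L : Type*} [LieRing L]
    (habel : ∀ a ∈ LieAlgebra.derivedSeries ℤ L 1, ∀ b ∈ LieAlgebra.derivedSeries ℤ L 1,
      ⁅a, b⁆ = (0 : L))
    (a b : LieSubalgebra ℤ L)
    (hsuma : ∀ y : L, ∃ z ∈ LieAlgebra.derivedSeries ℤ L 1, ∃ w ∈ a, y = z + w)
    (hinta : ∀ y ∈ LieAlgebra.derivedSeries ℤ L 1, y ∈ a → y = 0)
    (hsumb : ∀ y : L, ∃ z ∈ LieAlgebra.derivedSeries ℤ L 1, ∃ w ∈ b, y = z + w)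
    (hintb : ∀ y ∈ LieAlgebra.derivedSeries ℤ L 1, y ∈ b → y = 0)
    (a₀ : L) (ha₀ : a₀ ∈ a)
    (hmaps : ∀ z ∈ LieAlgebra.derivedSeries ℤ L 1, ⁅a₀, z⁆ ∈ LieAlgebra.derivedSeries ℤ L 1)
    (hinj : ∀ z ∈ LieAlgebra.derivedSeries ℤ L 1, ∀ w ∈ LieAlgebra.derivedSeries ℤ L 1,
      ⁅a₀, z⁆ = ⁅a₀, w⁆ → z = w)
    (hsurj : ∀ w ∈ LieAlgebra.derivedSeries ℤ L 1,
      ∃ z ∈ LieAlgebra.derivedSeries ℤ L 1, ⁅a₀, z⁆ = w) :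
    ∃ z ∈ LieAlgebra.derivedSeries ℤ L 1,
      (fun y : L => y + ⁅z, y⁆) '' (b : Set L) = (a : Set L) :=
  stmt_6_general habel a b hsuma hinta hsumb hintb a₀ ha₀ hinj hsurj
end

section
/- Let L be a Lie ring whose derived ideal L' = [L, L] is abelian, nonzero, not contained in the center of L, and minimal in the sense that the only ideals of L contained in L' are 0 and L'. Then for every x ∈ L that does not centralize L': (i) ad_x restricts to a bijection of L' onto itself; (ii) L = L' ⊕ C_L(x) as additive groups; (iii) C_L(x) is an abelian Cartan subring of L (abelian, nilpotent and self-normalizing). -/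
/-!
Since `L'` is abelian, `[[x, y], z] = 0` for `z ∈ L'`, so by the Jacobi identity `ad_x` commutes
with every `ad_y` on `L'`: it is an endomorphism of `L'` as an `L`-module. Minimality of `L'` says
this module is irreducible, so by Schur's lemma `ad_x|_{L'}` is either zero or bijective, and it is
not zero by the choice of `x`. Bijectivity gives `L = L' ⊕ C_L(x)` (write `[x, y] = [x, z]` with
`z ∈ L'`). For `a, b ∈ C_L(x)` and `y` normalizing `C_L(x)`, the elements `[a, b]` and `[x, y]`
lie in `L'` and are killed by `ad_x`, hence vanish.
-/

open LieAlgebra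

section Schur

variable {R L M M' : Type*} [CommRing R] [LieRing L]
  [AddCommGroup M] [Module R M] [LieRingModule L M]
  [AddCommGroup M'] [Module R M'] [LieRingModule L M']

lemma LieModuleHom.bijective_of_ne_zero {f : M →ₗ⁅R,L⁆ M'}
    (hM : ∀ N : LieSubmodule R L M, N = ⊥ ∨ N = ⊤)
    (hM' : ∀ N : LieSubmodule R L M', N = ⊥ ∨ N = ⊤) (hf : f ≠ 0) :
    Function.Bijective f := by
  refine ⟨(f.ker_eq_bot).mp ((hM f.ker).resolve_right fun h ↦ hf ?_),
    (f.range_eq_top).mp ((hM' f.range).resolve_left fun h ↦ hf ?_)⟩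
  · ext m
    exact f.mem_ker.mp (h ▸ LieSubmodule.mem_top m)
  · ext m
    exact (LieSubmodule.mem_bot _).mp (h ▸ (f.mem_range _).mpr ⟨m, rfl⟩)

lemma LieSubmodule.eq_bot_or_eq_top_of_minimal {N : LieSubmodule R L M}
    (hN : ∀ N' : LieSubmodule R L M, N' ≤ N → N' = ⊥ ∨ N' = N) (N' : LieSubmodule R L N) :
    N' = ⊥ ∨ N' = ⊤ := by
  have hinj := LieSubmodule.map_injective_of_injective N.injective_incl
  refine (hN _ (LieSubmodule.map_incl_le (N' := N'))).imp (fun h ↦ hinj ?_) (fun h ↦ hinj ?_)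
  · rw [h, LieSubmodule.map_bot]
  · rw [h, LieSubmodule.map_incl_top]

end Schur

section

variable {R L : Type*} [CommRing R] [LieRing L] [LieAlgebra R L]

lemma LieAlgebra.lie_mem_derivedSeries_one_s7 (y z : L) : ⁅y, z⁆ ∈ derivedSeries R L 1 := by
  rw [derivedSeries_def, derivedSeriesOfIdeal_succ]
  exact LieSubmodule.lie_mem_lie (LieSubmodule.mem_top y) (LieSubmodule.mem_top z)

namespace LieIdeal

variable (A : LieIdeal R L) (hA : ∀ a ∈ derivedSeries R L 1, ∀ b ∈ A, ⁅a, b⁆ = 0) (x : L)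

def adHom : A →ₗ⁅R,L⁆ A where
  toFun a := ⟨⁅x, (a : L)⁆, A.lie_mem a.2⟩
  map_add' a b := by ext; simp
  map_smul' r a := by ext; simp
  map_lie' {y a} := by
    ext
    simp [leibniz_lie x y, hA _ (lie_mem_derivedSeries_one_s7 x y) _ a.2]

@[simp]
lemma coe_adHom_apply (a : A) : (A.adHom hA x a : L) = ⁅x, (a : L)⁆ := rfl

include hA in
lemma adHom_bijective (hmin : ∀ J : LieIdeal R L, J ≤ A → J = ⊥ ∨ J = A)
    (hx : ¬ ∀ z ∈ A, ⁅x, z⁆ = 0) : Function.Bijective (A.adHom hA x) := by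
  have hA' := LieSubmodule.eq_bot_or_eq_top_of_minimal hmin
  refine LieModuleHom.bijective_of_ne_zero hA' hA' fun h ↦ hx fun z hz ↦ ?_
  simpa using congr_arg Subtype.val (LieModuleHom.congr_fun h ⟨z, hz⟩)

end LieIdeal

namespace LieSubalgebra

variable (R) in
def centralizer (x : L) : LieSubalgebra R L where
  carrier := {y | ⁅x, y⁆ = 0}
  add_mem' {a b} ha hb := by simp_all
  zero_mem' := lie_zero x
  smul_mem' r a ha := by simp_all
  lie_mem' {a b} ha hb := by simp_all [leibniz_lie x a b]

variable {x : L}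

@[simp]
lemma mem_centralizer {y : L} : y ∈ centralizer R x ↔ ⁅x, y⁆ = 0 := Iff.rfl

variable (hx : ∀ z ∈ derivedSeries R L 1, ⁅x, z⁆ = 0 → z = 0)
include hx

lemma lie_eq_zero_of_mem_centralizer {a b : L} (ha : a ∈ centralizer R x)
    (hb : b ∈ centralizer R x) : ⁅a, b⁆ = 0 :=
  hx _ (lie_mem_derivedSeries_one_s7 a b) (by simp_all [leibniz_lie x a b])

lemma normalizer_centralizer : (centralizer R x).normalizer = centralizer R x := by
  refine le_antisymm (fun y hy ↦ ?_) (centralizer R x).le_normalizer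
  have hyx : ⁅y, x⁆ ∈ centralizer R x := (mem_normalizer_iff _ y).mp hy x (lie_self x)
  rw [mem_centralizer] at hyx ⊢
  exact hx _ (lie_mem_derivedSeries_one_s7 x y) (by rwa [← neg_eq_zero, ← lie_neg, lie_skew])

end LieSubalgebra

end

theorem stmt_7_general {L : Type*} [LieRing L]
    (habel : ∀ a ∈ LieAlgebra.derivedSeries ℤ L 1, ∀ b ∈ LieAlgebra.derivedSeries ℤ L 1,
      ⁅a, b⁆ = (0 : L))
    (hmin : ∀ J : LieIdeal ℤ L, J ≤ LieAlgebra.derivedSeries ℤ L 1 →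
      J = ⊥ ∨ J = LieAlgebra.derivedSeries ℤ L 1)
    (x : L) (hx : ¬ ∀ z ∈ LieAlgebra.derivedSeries ℤ L 1, ⁅x, z⁆ = 0) :
    -- (i) ad_x restricts to a bijection of L' onto itself
    ((∀ z ∈ LieAlgebra.derivedSeries ℤ L 1, ⁅x, z⁆ ∈ LieAlgebra.derivedSeries ℤ L 1) ∧
     (∀ z ∈ LieAlgebra.derivedSeries ℤ L 1, ∀ w ∈ LieAlgebra.derivedSeries ℤ L 1,
        ⁅x, z⁆ = ⁅x, w⁆ → z = w) ∧
     (∀ w ∈ LieAlgebra.derivedSeries ℤ L 1,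
        ∃ z ∈ LieAlgebra.derivedSeries ℤ L 1, ⁅x, z⁆ = w)) ∧
    -- (ii) L = L' ⊕ C_L(x)
    ((∀ y : L, ∃ z ∈ LieAlgebra.derivedSeries ℤ L 1, ∃ c : L, ⁅x, c⁆ = 0 ∧ y = z + c) ∧
     (∀ z ∈ LieAlgebra.derivedSeries ℤ L 1, ⁅x, z⁆ = 0 → z = 0)) ∧
    -- (iii) C_L(x) is an abelian Cartan subring: abelian and self-normalizing subring
    (∃ c : LieSubalgebra ℤ L, (c : Set L) = {y : L | ⁅x, y⁆ = 0} ∧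
      (∀ a ∈ c, ∀ b ∈ c, ⁅a, b⁆ = (0 : L)) ∧ c.normalizer = c) := by
  set D := derivedSeries ℤ L 1
  obtain ⟨hinj, hsurj⟩ := D.adHom_bijective habel x hmin hx
  have hinj' : ∀ z ∈ D, ∀ w ∈ D, ⁅x, z⁆ = ⁅x, w⁆ → z = w := fun z hz w hw h ↦
    congr_arg Subtype.val (hinj (a₁ := ⟨z, hz⟩) (a₂ := ⟨w, hw⟩) (Subtype.ext h))
  have hker : ∀ z ∈ D, ⁅x, z⁆ = 0 → z = 0 := fun z hz h ↦
    hinj' z hz 0 D.zero_mem (by rw [h, lie_zero])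
  have himage : ∀ w ∈ D, ∃ z ∈ D, ⁅x, z⁆ = w := fun w hw ↦ by
    obtain ⟨⟨z, hz⟩, hzw⟩ := hsurj ⟨w, hw⟩
    exact ⟨z, hz, congr_arg Subtype.val hzw⟩
  have hdecomp : ∀ y : L, ∃ z ∈ D, ∃ c : L, ⁅x, c⁆ = 0 ∧ y = z + c := fun y ↦ by
    obtain ⟨z, hz, hzy⟩ := himage _ (lie_mem_derivedSeries_one_s7 x y)
    exact ⟨z, hz, y - z, by rw [lie_sub, hzy, sub_self], by abel⟩
  exact ⟨⟨fun z _ ↦ lie_mem_derivedSeries_one_s7 x z, hinj', himage⟩, ⟨hdecomp, hker⟩,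
    LieSubalgebra.centralizer ℤ x, rfl,
    fun a ha b hb ↦ LieSubalgebra.lie_eq_zero_of_mem_centralizer hker ha hb,
    LieSubalgebra.normalizer_centralizer hker⟩

/-- Let `L` be a Lie ring whose derived ideal `L'` is abelian, nonzero, not
contained in the center of `L`, and minimal (the only ideals of `L` contained in `L'` are
`0` and `L'`).  Then for every `x ∈ L` not centralizing `L'`:
(i) `ad_x` restricts to a bijection of `L'` onto itself;
(ii) `L = L' ⊕ C_L(x)` as additive groups;
(iii) `C_L(x)` is an abelian Cartan subring (abelian, nilpotent and self-normalizing). -/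
theorem stmt_7 {L : Type*} [LieRing L]
    (habel : ∀ a ∈ LieAlgebra.derivedSeries ℤ L 1, ∀ b ∈ LieAlgebra.derivedSeries ℤ L 1,
      ⁅a, b⁆ = (0 : L))
    (hne : ∃ w ∈ LieAlgebra.derivedSeries ℤ L 1, w ≠ (0 : L))
    (hnc : ¬ ∀ w ∈ LieAlgebra.derivedSeries ℤ L 1, ∀ y : L, ⁅y, w⁆ = 0)
    (hmin : ∀ J : LieIdeal ℤ L, J ≤ LieAlgebra.derivedSeries ℤ L 1 →
      J = ⊥ ∨ J = LieAlgebra.derivedSeries ℤ L 1)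
    (x : L) (hx : ¬ ∀ z ∈ LieAlgebra.derivedSeries ℤ L 1, ⁅x, z⁆ = 0) :
    -- (i) ad_x restricts to a bijection of L' onto itself
    ((∀ z ∈ LieAlgebra.derivedSeries ℤ L 1, ⁅x, z⁆ ∈ LieAlgebra.derivedSeries ℤ L 1) ∧
     (∀ z ∈ LieAlgebra.derivedSeries ℤ L 1, ∀ w ∈ LieAlgebra.derivedSeries ℤ L 1,
        ⁅x, z⁆ = ⁅x, w⁆ → z = w) ∧
     (∀ w ∈ LieAlgebra.derivedSeries ℤ L 1,
        ∃ z ∈ LieAlgebra.derivedSeries ℤ L 1, ⁅x, z⁆ = w)) ∧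
    -- (ii) L = L' ⊕ C_L(x)
    ((∀ y : L, ∃ z ∈ LieAlgebra.derivedSeries ℤ L 1, ∃ c : L, ⁅x, c⁆ = 0 ∧ y = z + c) ∧
     (∀ z ∈ LieAlgebra.derivedSeries ℤ L 1, ⁅x, z⁆ = 0 → z = 0)) ∧
    -- (iii) C_L(x) is an abelian Cartan subring: abelian and self-normalizing subring
    (∃ c : LieSubalgebra ℤ L, (c : Set L) = {y : L | ⁅x, y⁆ = 0} ∧
      (∀ a ∈ c, ∀ b ∈ c, ⁅a, b⁆ = (0 : L)) ∧ c.normalizer = c) :=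
  stmt_7_general habel hmin x hx
end

section
/- Let L be a Lie ring, I an ideal of L, and h a subring of L. If h is abnormal in the subring h + I and the subring h + I is abnormal in L, then h is abnormal in L. -/
/-- A subring `a` of a Lie ring `g` is abnormal in a subring `k ⊇ a` if every subring `u`
with `a ⊆ u ⊆ k` satisfies `N_k(u) = u`. -/
def IsAbnormalIn {g : Type*} [LieRing g] (a k : LieSubalgebra ℤ g) : Prop :=
  ∀ u : LieSubalgebra ℤ g, a ≤ u → u ≤ k →
    ∀ y ∈ k, (∀ v ∈ u, ⁅y, v⁆ ∈ u) → y ∈ u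

/-- A subring `a` of a Lie ring `g` is abnormal if every subring `u ⊇ a` is
self-normalizing. -/
def IsAbnormal {g : Type*} [LieRing g] (a : LieSubalgebra ℤ g) : Prop :=
  ∀ u : LieSubalgebra ℤ g, a ≤ u → u.normalizer = u

/-!
If `y` normalizes `u ⊇ h`, then `y` normalizes `u + I ⊇ h + I`, so abnormality of `h + I` puts
`y` in `u + I`: `y = a + b` with `a ∈ u` and `b ∈ I`. The component `b = y - a` still normalizes
`u`, and it lies in `h + I`, so it normalizes `u ∩ (h + I)`; abnormality of `h` in `h + I` then
gives `b ∈ u`, hence `y ∈ u`.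
-/

namespace LieSubalgebra

variable {R L : Type*} [CommRing R] [LieRing L] [LieAlgebra R L]

def sumIdeal (u : LieSubalgebra R L) (I : LieIdeal R L) : LieSubalgebra R L where
  toSubmodule := u.toSubmodule ⊔ LieSubmodule.toSubmodule I
  lie_mem' := by
    intro _ _ hx hy
    obtain ⟨a, ha, b, hb, rfl⟩ := Submodule.mem_sup.1 hx
    obtain ⟨a', ha', b', hb', rfl⟩ := Submodule.mem_sup.1 hy
    rw [add_lie, lie_add, add_assoc]
    exact Submodule.add_mem_sup (u.lie_mem ha ha')
      (I.add_mem (LieSubmodule.lie_mem _ hb') (lie_mem_left R L I _ _ hb))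

variable {u v : LieSubalgebra R L} {I : LieIdeal R L} {x : L}

theorem mem_sumIdeal : x ∈ u.sumIdeal I ↔ ∃ a ∈ u, ∃ b ∈ I, a + b = x :=
  Submodule.mem_sup

theorem le_sumIdeal : u ≤ u.sumIdeal I :=
  fun _ hx => mem_sumIdeal.2 ⟨_, hx, 0, I.zero_mem, add_zero _⟩

theorem ideal_le_sumIdeal : I.toLieSubalgebra ≤ u.sumIdeal I :=
  fun _ hx => mem_sumIdeal.2 ⟨0, u.zero_mem, _, hx, zero_add _⟩

theorem sumIdeal_mono (huv : u ≤ v) : u.sumIdeal I ≤ v.sumIdeal I :=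
  sup_le_sup_right ((toSubmodule_le_toSubmodule _ _).2 huv) _

theorem normalizer_le_normalizer_sumIdeal : u.normalizer ≤ (u.sumIdeal I).normalizer := by
  intro y hy
  rw [mem_normalizer_iff] at hy ⊢
  intro z hz
  obtain ⟨a, ha, b, hb, rfl⟩ := mem_sumIdeal.1 hz
  rw [lie_add]
  exact Submodule.add_mem_sup (hy a ha) (LieSubmodule.lie_mem _ hb)

theorem mem_normalizer_inf {y : L} (hu : y ∈ u.normalizer) (hv : y ∈ v.normalizer) :
    y ∈ (u ⊓ v).normalizer := by
  rw [mem_normalizer_iff] at hu hv ⊢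
  exact fun z hz => ⟨hu z hz.1, hv z hz.2⟩

end LieSubalgebra

open LieSubalgebra

/-- Let `L` be a Lie ring, `I` an ideal of `L`, and `h` a subring of `L`.
If `h` is abnormal in the subring `h + I` and `h + I` is abnormal in `L`, then `h` is
abnormal in `L`. -/
theorem stmt_11 {L : Type*} [LieRing L] (I : LieIdeal ℤ L) (h k : LieSubalgebra ℤ L)
    (hk : (k : Set L) = {x : L | ∃ a ∈ h, ∃ b ∈ I, x = a + b})
    (h1 : IsAbnormalIn h k)
    (h2 : IsAbnormal k) :
    IsAbnormal h := by
  obtain rfl : k = h.sumIdeal I := SetLike.coe_injective <| hk.trans <| by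
    ext x
    simp only [Set.mem_ofPred_eq, SetLike.mem_coe, mem_sumIdeal, eq_comm]
  intro u hu
  refine le_antisymm (fun y hy => ?_) u.le_normalizer
  have hyW : y ∈ u.sumIdeal I := by
    rw [← h2 _ (sumIdeal_mono hu)]
    exact normalizer_le_normalizer_sumIdeal hy
  obtain ⟨a, ha, b, hb, rfl⟩ := mem_sumIdeal.1 hyW
  have hbk : b ∈ h.sumIdeal I := ideal_le_sumIdeal hb
  have hbN : b ∈ u.normalizer := by
    simpa only [add_sub_cancel_left] using u.normalizer.sub_mem hy (u.le_normalizer ha)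
  have hbu : b ∈ u ⊓ h.sumIdeal I :=
    h1 _ (le_inf hu le_sumIdeal) inf_le_right b hbk <| (mem_normalizer_iff _ _).1 <|
      mem_normalizer_inf hbN ((h.sumIdeal I).le_normalizer hbk)
  exact u.add_mem ha hbu.1
end

section
/- Let L be a Lie ring, let I be a minimal ideal of L (I ≠ 0 and the only ideals of L contained in I are 0 and I) that is not contained in the center of L, and let h be a subring of L such that L = C_L(I) + h. Then h is abnormal in the subring h + I: every subring u with h ⊆ u ⊆ h + I satisfies N_{h+I}(u) = u. -/
/-!
Let `y = a + b` with `a ∈ h`, `b ∈ I` normalize `u`. Since `L = C_L(I) + h` and `h ⊆ u`, every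
bracket `⁅x, m⁆` with `m ∈ I` equals some `⁅a', m⁆` with `a' ∈ u`, so `I ∩ u` is an ideal of `L`
and, by minimality, is `0` or `I`. If it is `I`, then `b ∈ u`. If it is `0`, then each
`⁅b, a'⁆ = ⁅y, a'⁆ - ⁅a, a'⁆` lies in `I ∩ u = 0`, so `b` is central; but `I ∩ Z(L)` is an ideal
properly contained in `I`, hence `0`, so `b = 0` and `y = a ∈ u`.
-/

namespace LieIdeal

variable {R L : Type*} [CommRing R] [LieRing L] [LieAlgebra R L]

theorem exists_lie_eq_of_centralizer_add {I : LieIdeal R L} {h : LieSubalgebra R L}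
    (hsum : ∀ x : L, ∃ c : L, (∀ b ∈ I, ⁅c, b⁆ = 0) ∧ ∃ y ∈ h, x = c + y) (x : L) :
    ∃ y ∈ h, ∀ b ∈ I, ⁅x, b⁆ = ⁅y, b⁆ := by
  obtain ⟨c, hc, y, hy, rfl⟩ := hsum x
  exact ⟨y, hy, fun b hb => by rw [add_lie, hc b hb, zero_add]⟩

def infSubalgebra (I : LieIdeal R L) (u : LieSubalgebra R L)
    (hu : ∀ x : L, ∃ y ∈ u, ∀ b ∈ I, ⁅x, b⁆ = ⁅y, b⁆) : LieIdeal R L :=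
  { (I : Submodule R L) ⊓ u.toSubmodule with
    lie_mem := fun {x m} hm => by
      obtain ⟨y, hy, hxy⟩ := hu x
      rw [hxy m hm.1]
      exact ⟨I.lie_mem hm.1, u.lie_mem hy hm.2⟩ }

theorem mem_infSubalgebra {I : LieIdeal R L} {u : LieSubalgebra R L}
    {hu : ∀ x : L, ∃ y ∈ u, ∀ b ∈ I, ⁅x, b⁆ = ⁅y, b⁆} {x : L} :
    x ∈ infSubalgebra I u hu ↔ x ∈ I ∧ x ∈ u :=
  Iff.rfl

theorem inf_center_eq_bot {I : LieIdeal R L} (hmin : ∀ J : LieIdeal R L, J ≤ I → J = ⊥ ∨ J = I)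
    (hnc : ¬ ∀ b ∈ I, ∀ y : L, ⁅b, y⁆ = 0) : I ⊓ LieAlgebra.center R L = ⊥ := by
  refine (hmin _ inf_le_left).resolve_right fun hI => hnc fun b hb y => ?_
  have hbZ : b ∈ LieAlgebra.center R L := (inf_eq_left.mp hI) hb
  rw [← lie_skew, (LieModule.mem_maxTrivSubmodule R L L b).mp hbZ y, neg_zero]

theorem mem_center_of_add_normalizes_of_inf_eq_bot {I : LieIdeal R L} {u : LieSubalgebra R L}
    (hu : ∀ x : L, ∃ y ∈ u, ∀ b ∈ I, ⁅x, b⁆ = ⁅y, b⁆) (hbot : infSubalgebra I u hu = ⊥)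
    {a b : L} (ha : a ∈ u) (hb : b ∈ I) (hnorm : ∀ v ∈ u, ⁅a + b, v⁆ ∈ u) :
    b ∈ LieAlgebra.center R L := by
  refine (LieModule.mem_maxTrivSubmodule R L L b).mpr fun x => ?_
  obtain ⟨v, hv, hxv⟩ := hu x
  have hbv_mem : ⁅b, v⁆ ∈ infSubalgebra I u hu := by
    refine mem_infSubalgebra.mpr ⟨?_, ?_⟩
    · rw [← lie_skew]
      exact I.neg_mem (I.lie_mem hb)
    · have hdiff : ⁅b, v⁆ = ⁅a + b, v⁆ - ⁅a, v⁆ := by rw [add_lie]; abel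
      rw [hdiff]
      exact u.sub_mem (hnorm v hv) (u.lie_mem ha hv)
  rw [hbot, LieSubmodule.mem_bot] at hbv_mem
  rw [hxv b hb, ← lie_skew, hbv_mem, neg_zero]

end LieIdeal

open LieIdeal in
theorem stmt_12_general {L : Type*} [LieRing L] (I : LieIdeal ℤ L)
    (hmin : ∀ J : LieIdeal ℤ L, J ≤ I → J = ⊥ ∨ J = I)
    (hnc : ¬ ∀ b ∈ I, ∀ y : L, ⁅b, y⁆ = 0)
    (h : LieSubalgebra ℤ L)
    (hsum : ∀ x : L, ∃ c : L, (∀ b ∈ I, ⁅c, b⁆ = 0) ∧ ∃ y ∈ h, x = c + y) :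
    ∀ u : LieSubalgebra ℤ L, h ≤ u →
      (u : Set L) ⊆ {x : L | ∃ a ∈ h, ∃ b ∈ I, x = a + b} →
      ∀ y ∈ {x : L | ∃ a ∈ h, ∃ b ∈ I, x = a + b},
        (∀ v ∈ u, ⁅y, v⁆ ∈ u) → y ∈ u := by
  intro u hhu _ y ⟨a, ha, b, hb, hy⟩ hnorm
  subst hy
  have hu : ∀ x : L, ∃ y ∈ u, ∀ b ∈ I, ⁅x, b⁆ = ⁅y, b⁆ := fun x => by
    obtain ⟨y, hy, hxy⟩ := exists_lie_eq_of_centralizer_add hsum x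
    exact ⟨y, hhu hy, hxy⟩
  refine u.add_mem (hhu ha) ?_
  rcases hmin (infSubalgebra I u hu) fun x hx => (mem_infSubalgebra.mp hx).1 with hbot | htop
  · have hbZ : b ∈ I ⊓ LieAlgebra.center ℤ L :=
      ⟨hb, mem_center_of_add_normalizes_of_inf_eq_bot hu hbot (hhu ha) hb hnorm⟩
    rw [inf_center_eq_bot hmin hnc, LieSubmodule.mem_bot] at hbZ
    rw [hbZ]
    exact u.zero_mem
  · exact (mem_infSubalgebra.mp (htop ▸ hb)).2

/-- Let `L` be a Lie ring, `I` a minimal ideal of `L` not contained in the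
center of `L`, and `h` a subring of `L` with `L = C_L(I) + h`.  Then `h` is abnormal in the
subring `h + I`: every subring `u` with `h ⊆ u ⊆ h + I` satisfies `N_{h+I}(u) = u`. -/
theorem stmt_12 {L : Type*} [LieRing L] (I : LieIdeal ℤ L)
    (hInz : I ≠ ⊥)
    (hmin : ∀ J : LieIdeal ℤ L, J ≤ I → J = ⊥ ∨ J = I)
    (hnc : ¬ ∀ b ∈ I, ∀ y : L, ⁅b, y⁆ = 0)
    (h : LieSubalgebra ℤ L)
    (hsum : ∀ x : L, ∃ c : L, (∀ b ∈ I, ⁅c, b⁆ = 0) ∧ ∃ y ∈ h, x = c + y) :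
    ∀ u : LieSubalgebra ℤ L, h ≤ u →
      (u : Set L) ⊆ {x : L | ∃ a ∈ h, ∃ b ∈ I, x = a + b} →
      ∀ y ∈ {x : L | ∃ a ∈ h, ∃ b ∈ I, x = a + b},
        (∀ v ∈ u, ⁅y, v⁆ ∈ u) → y ∈ u :=
  stmt_12_general I hmin hnc h hsum
end

section
/- Let L be a Lie ring and x ∈ L such that ad_x restricts to a bijection of the derived ideal L' onto itself. Then the Engel subring of x equals the centralizer of x: E_L(x) = C_L(x). -/
/-! Every bracket `⁅x, y⁆` lies in `L'`, where `ad_x` is injective. Hence `ad_x^(n+1) y = 0`,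
read as `ad_x^n (ad_x y) = 0`, gives `ad_x (ad_x y) = 0` by induction, and injectivity on `L'`
turns this into `ad_x y = 0`. -/

theorem Function.apply_eq_zero_of_iterate_eq_zero {M : Type*} [Zero M] {f : M → M} {S : Set M}
    (hf₀ : f 0 = 0) (hrange : Set.range f ⊆ S) (hinj : Set.InjOn f S) :
    ∀ (n : ℕ) (y : M), f^[n] y = 0 → f y = 0
  | 0, y, hy => by rw [Function.iterate_zero_apply] at hy; rw [hy, hf₀]
  | n + 1, y, hy => by
    rw [Function.iterate_succ_apply] at hy
    have hffy : f (f y) = f 0 :=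
      (Function.apply_eq_zero_of_iterate_eq_zero hf₀ hrange hinj n (f y) hy).trans hf₀.symm
    exact hinj (hrange ⟨y, rfl⟩) (hrange ⟨0, hf₀⟩) hffy

theorem Function.exists_iterate_eq_zero_iff {M : Type*} [Zero M] {f : M → M} {S : Set M}
    (hf₀ : f 0 = 0) (hrange : Set.range f ⊆ S) (hinj : Set.InjOn f S) (y : M) :
    (∃ n : ℕ, f^[n] y = 0) ↔ f y = 0 :=
  ⟨fun ⟨n, hn⟩ => Function.apply_eq_zero_of_iterate_eq_zero hf₀ hrange hinj n y hn,
    fun hy => ⟨1, hy⟩⟩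

theorem LieAlgebra.lie_mem_derivedSeries_one_s13 {R L : Type*} [CommRing R] [LieRing L]
    [LieAlgebra R L] (x y : L) : ⁅x, y⁆ ∈ LieAlgebra.derivedSeries R L 1 := by
  rw [LieAlgebra.derivedSeries_def, LieAlgebra.derivedSeriesOfIdeal_succ,
    LieAlgebra.derivedSeriesOfIdeal_zero]
  exact LieSubmodule.lie_mem_lie (LieSubmodule.mem_top x) (LieSubmodule.mem_top y)

theorem stmt_13_general {L : Type*} [LieRing L] (x : L)
    (hinj : ∀ z ∈ LieAlgebra.derivedSeries ℤ L 1, ∀ w ∈ LieAlgebra.derivedSeries ℤ L 1,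
      ⁅x, z⁆ = ⁅x, w⁆ → z = w) :
    {y : L | ∃ n : ℕ, (fun z : L => ⁅x, z⁆)^[n] y = 0} = {y : L | ⁅x, y⁆ = 0} := by
  ext y
  exact Function.exists_iterate_eq_zero_iff (lie_zero x)
    (Set.range_subset_iff.mpr fun y => LieAlgebra.lie_mem_derivedSeries_one_s13 (R := ℤ) x y)
    (fun z hz w hw h => hinj z hz w hw h) y

/-- Let `L` be a Lie ring and `x ∈ L` such that `ad_x` restricts to a
bijection of the derived ideal `L'` onto itself.  Then the Engel subring of `x` equals the
centralizer of `x`: `E_L(x) = C_L(x)`. -/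
theorem stmt_13 {L : Type*} [LieRing L] (x : L)
    (hmaps : ∀ z ∈ LieAlgebra.derivedSeries ℤ L 1, ⁅x, z⁆ ∈ LieAlgebra.derivedSeries ℤ L 1)
    (hinj : ∀ z ∈ LieAlgebra.derivedSeries ℤ L 1, ∀ w ∈ LieAlgebra.derivedSeries ℤ L 1,
      ⁅x, z⁆ = ⁅x, w⁆ → z = w)
    (hsurj : ∀ w ∈ LieAlgebra.derivedSeries ℤ L 1,
      ∃ z ∈ LieAlgebra.derivedSeries ℤ L 1, ⁅x, z⁆ = w) :
    {y : L | ∃ n : ℕ, (fun z : L => ⁅x, z⁆)^[n] y = 0} = {y : L | ⁅x, y⁆ = 0} :=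
  stmt_13_general x hinj
end

section
/- Let L be a Lie ring, n a nilpotent ideal of L, and I a minimal ideal of L (I ≠ 0 and the only ideals of L contained in I are 0 and I). Then n centralizes I, i.e., [n, I] = 0. -/
/-- Let `L` be a Lie ring, `n` a nilpotent ideal of `L`, and `I` a minimal
ideal of `L`.  Then `n` centralizes `I`: `[n, I] = 0`. -/
theorem stmt_15 {L : Type*} [LieRing L] (n I : LieIdeal ℤ L)
    (hn : LieRing.IsNilpotent ↥n)
    (hInz : I ≠ ⊥)
    (hmin : ∀ J : LieIdeal ℤ L, J ≤ I → J = ⊥ ∨ J = I) :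
    ∀ a ∈ n, ∀ b ∈ I, ⁅a, b⁆ = (0 : L) := by
  intro a ha b hb
  have hle : ⁅n, I⁆ ≤ I := LieSubmodule.lie_le_right I n
  rcases hmin _ hle with h | h
  · have hmem : ⁅a, b⁆ ∈ ⁅n, I⁆ := LieSubmodule.lie_mem_lie ha hb
    rw [h] at hmem
    simpa using hmem
  · exfalso
    have hIn : I ≤ n := by
      rw [← h]; exact LieSubmodule.lie_le_left n I
    obtain ⟨k, hk⟩ := hn.nilpotent_int
    have key : ∀ k, ∀ x ∈ I,
        ∃ hx : x ∈ n, (⟨x, hx⟩ : ↥n) ∈ LieModule.lowerCentralSeries ℤ ↥n ↥n k := by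
      intro k
      induction k with
      | zero => intro x hx; exact ⟨hIn hx, LieSubmodule.mem_top _⟩
      | succ k ih =>
        intro x hx
        have hx' : x ∈ LieSubmodule.toSubmodule ⁅n, I⁆ := by rw [h]; exact hx
        rw [LieSubmodule.lieIdeal_oper_eq_linear_span'] at hx'
        refine Submodule.span_induction
          (p := fun m _ =>
            ∃ hm : m ∈ n, (⟨m, hm⟩ : ↥n) ∈ LieModule.lowerCentralSeries ℤ ↥n ↥n (k + 1))
          ?_ ?_ ?_ ?_ hx'
        · rintro m ⟨u, hu, v, hv, rfl⟩
          obtain ⟨hvn, hv'⟩ := ih v hv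
          refine ⟨n.lie_mem hvn, ?_⟩
          have heq : (⟨⁅u, v⁆, n.lie_mem hvn⟩ : ↥n) = ⁅(⟨u, hu⟩ : ↥n), (⟨v, hvn⟩ : ↥n)⁆ := rfl
          rw [heq, LieModule.lowerCentralSeries_succ]
          exact LieSubmodule.lie_mem_lie (LieSubmodule.mem_top _) hv'
        · refine ⟨n.zero_mem, ?_⟩
          rw [show (⟨(0 : L), n.zero_mem⟩ : ↥n) = 0 from rfl]
          exact (LieModule.lowerCentralSeries ℤ ↥n ↥n (k + 1)).zero_mem
        · rintro u v _ _ ⟨hun, hu'⟩ ⟨hvn, hv'⟩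
          refine ⟨n.add_mem hun hvn, ?_⟩
          have heq : (⟨u + v, n.add_mem hun hvn⟩ : ↥n)
              = (⟨u, hun⟩ : ↥n) + (⟨v, hvn⟩ : ↥n) := rfl
          rw [heq]
          exact (LieModule.lowerCentralSeries ℤ ↥n ↥n (k + 1)).add_mem hu' hv'
        · rintro c u _ ⟨hun, hu'⟩
          refine ⟨n.smul_mem c hun, ?_⟩
          have heq : (⟨c • u, n.smul_mem c hun⟩ : ↥n) = c • (⟨u, hun⟩ : ↥n) := rfl
          rw [heq]
          exact (LieModule.lowerCentralSeries ℤ ↥n ↥n (k + 1)).smul_mem c hu'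
    apply hInz
    rw [eq_bot_iff]
    intro x hx
    obtain ⟨hxn, hx'⟩ := key k x hx
    rw [hk] at hx'
    have : (⟨x, hxn⟩ : ↥n) = 0 := by simpa using hx'
    simpa [LieSubmodule.mem_bot] using Subtype.ext_iff.mp this
end
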